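/- Let X^n ⊂ ℝ^d (d ≥ 2). For every x ∉ M(X^n) and every z ∈ M(X^n), there exists a unit vector u ∈ U_x with u·x < u·z; that is, U_x ∩ H_{x,z} ≠ ∅. -/

import Mathlib

open scoped RealInnerProductSpace
open MeasureTheory

noncomputable section

/-- `E d` is the Euclidean space `ℝ^d`. -/
abbrev E (d : ℕ) : Type := EuclideanSpace ℝ (Fin d)

/-- A sample `X` of `n` points in `ℝ^d` is in general position if no affine hyperplane
(encoded as `{x | ⟪v, x⟫ = c}` for some `v ≠ 0`) contains more than `d` of the points. -/
def inGeneralPosition {d n : ℕ} (X : Fin n → E d) : Prop :=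
  ∀ v : E d, v ≠ 0 → ∀ c : ℝ, ({i : Fin n | ⟪v, X i⟫ = c} : Set (Fin n)).ncard ≤ d

/-- Number of sample points in the closed halfspace `{z | ⟪u, z⟫ ≤ ⟪u, x⟫}`. -/
def sideCount {d n : ℕ} (X : Fin n → E d) (u x : E d) : ℕ :=
  ({i : Fin n | ⟪u, X i⟫ ≤ ⟪u, x⟫} : Set (Fin n)).ncard

/-- Tukey's halfspace depth of `x` with respect to the sample `X`. -/
def depth {d n : ℕ} (X : Fin n → E d) (x : E d) : ℝ :=
  sInf {r : ℝ | ∃ u : E d, ‖u‖ = 1 ∧ r = (sideCount X u x : ℝ) / (n : ℝ)}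

/-- The maximum Tukey depth `λ*` of the sample `X`. -/
def maxDepth {d n : ℕ} (X : Fin n → E d) : ℝ :=
  sSup (Set.range (depth X))

/-- The set `M(X)` of deepest points. -/
def MSet {d n : ℕ} (X : Fin n → E d) : Set (E d) :=
  {x | depth X x = maxDepth X}

/-- `U_x`: the set of optimal (unit) directions realizing the depth at `x`. -/
def USet {d n : ℕ} (X : Fin n → E d) (x : E d) : Set (E d) :=
  {u | ‖u‖ = 1 ∧ (sideCount X u x : ℝ) / (n : ℝ) = depth X x}

/-- `H_{x,y}`: the open hemisphere of unit directions `u` with `⟪u, x⟫ < ⟪u, y⟫`. -/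
def HSet {d : ℕ} (x y : E d) : Set (E d) :=
  {u | ‖u‖ = 1 ∧ ⟪u, x⟫ < ⟪u, y⟫}

/-- `B_z`. -/
def BSet {d n : ℕ} (X : Fin n → E d) (z : E d) : Set (E d) :=
  {x | x ∈ MSet X ∧ USet X x ∩ HSet x z = ∅}

/-- `B̃_z = B_z \ {z}`. -/
def BTilde {d n : ℕ} (X : Fin n → E d) (z : E d) : Set (E d) :=
  BSet X z \ {z}

/-- `v` is a unit vector normal to an affine hyperplane spanned by `d` of the sample points. -/
def normalToSampleHyperplane {d n : ℕ} (X : Fin n → E d) (v : E d) : Prop :=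
  ‖v‖ = 1 ∧ ∃ (s : Finset (Fin n)) (c : ℝ), s.card = d ∧
    (affineSpan ℝ (X '' (s : Set (Fin n))) : Set (E d)) = {x : E d | ⟪v, x⟫ = c}

/-- Condition (2.1) on a unit direction `u`. -/
def cond21 {d n : ℕ} (X : Fin n → E d) (u : E d) : Prop :=
  ∀ v : E d, normalToSampleHyperplane X v → ⟪u, v⟫ ≠ 0

/-- `A` represents the columns of a `d × (d-1)` matrix which together with the unit
vector `u` form an orthonormal basis of `ℝ^d`. -/
def IsAu {d : ℕ} (u : E d) (A : Fin (d - 1) → E d) : Prop :=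
  ‖u‖ = 1 ∧ Orthonormal ℝ A ∧ ∀ j, ⟪A j, u⟫ = 0

/-- The `A_u`-projection `A_u^T x ∈ ℝ^{d-1}` of a point `x ∈ ℝ^d`. -/
def proj {d : ℕ} (A : Fin (d - 1) → E d) (x : E d) : E (d - 1) :=
  (WithLp.equiv 2 (Fin (d - 1) → ℝ)).symm (fun j => ⟪A j, x⟫)

/-- The embedding `A_u x = ∑ j x_j A_j ∈ ℝ^d` of a point `x ∈ ℝ^{d-1}`. -/
def embed {d : ℕ} (A : Fin (d - 1) → E d) (x : E (d - 1)) : E d :=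
  ∑ j, x j • A j

/-- `λ₀ = inf_{u ∈ S^{d-1}} λ*(X_u^n)`, the infimum over all directions of the maximum
Tukey depth of the projected sample. -/
def lambda0 {d n : ℕ} (X : Fin n → E d) : ℝ :=
  sInf {r : ℝ | ∃ (u : E d) (A : Fin (d - 1) → E d),
    IsAu u A ∧ r = maxDepth (fun i => proj A (X i))}

/-- The average (barycenter) of a set `K ⊆ ℝ^d`, taken with respect to the Hausdorff
measure of dimension equal to the affine dimension of `K`. -/
def setAverage {d : ℕ} (K : Set (E d)) : E d :=
  (μH[(Module.finrank ℝ (affineSpan ℝ K).direction : ℝ)] K).toReal⁻¹ •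
    ∫ x in K, x ∂(μH[(Module.finrank ℝ (affineSpan ℝ K).direction : ℝ)])

/-- Tukey's halfspace median: the average of all deepest points. -/
def TukeyMedian {d n : ℕ} (X : Fin n → E d) : E d :=
  setAverage (MSet X)

/-- `m` contaminating points suffice to break down the Tukey median at `X`. -/
def breaksDown {d n : ℕ} (X : Fin n → E d) (m : ℕ) : Prop :=
  ∀ C : ℝ, ∃ Y : Fin m → E d, C < ‖TukeyMedian (Fin.append X Y) - TukeyMedian X‖

/-- The finite sample (additional) breakdown point of the Tukey median at `X`. -/
def FSBP {d n : ℕ} (X : Fin n → E d) : ℝ :=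
  sInf {r : ℝ | ∃ m : ℕ, 1 ≤ m ∧ breaksDown X m ∧ r = (m : ℝ) / ((n : ℝ) + (m : ℝ))}

/-! If `⟪u, z⟫ ≤ ⟪u, x⟫` for a direction `u` realizing the depth of `x`, the closed halfspace
`{⟪u, ·⟫ ≤ ⟪u, z⟫}` lies inside `{⟪u, ·⟫ ≤ ⟪u, x⟫}`, so `z` is at most as deep as `x`. Since the
depth takes finitely many values, some direction realizes it, and for `x ∉ M(X)`, `z ∈ M(X)`
this direction must therefore put `x` strictly below `z`. -/

section TukeyDepth

variable {d n : ℕ} (X : Fin n → E d)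

lemma sideCount_le (u x : E d) : sideCount X u x ≤ n :=
  (Set.ncard_le_ncard (Set.subset_univ _)).trans_eq (by simp)

lemma sideCount_mono {u x y : E d} (h : ⟪u, y⟫ ≤ ⟪u, x⟫) :
    sideCount X u y ≤ sideCount X u x :=
  Set.ncard_le_ncard (fun _ hi => le_trans hi h) (Set.toFinite _)

lemma sideCount_div_le_one (u x : E d) : (sideCount X u x : ℝ) / n ≤ 1 :=
  div_le_one_of_le₀ (by exact_mod_cast sideCount_le X u x) (Nat.cast_nonneg n)

lemma finite_sideCount_ratios (x : E d) :
    {r : ℝ | ∃ u : E d, ‖u‖ = 1 ∧ r = (sideCount X u x : ℝ) / n}.Finite := by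
  refine ((Set.finite_Iic n).image (fun k : ℕ => (k : ℝ) / n)).subset ?_
  rintro r ⟨u, -, rfl⟩
  exact ⟨sideCount X u x, sideCount_le X u x, rfl⟩

lemma bddBelow_sideCount_ratios (x : E d) :
    BddBelow {r : ℝ | ∃ u : E d, ‖u‖ = 1 ∧ r = (sideCount X u x : ℝ) / n} :=
  ⟨0, by rintro r ⟨u, -, rfl⟩; positivity⟩

lemma depth_le_sideCount_div {u : E d} (hu : ‖u‖ = 1) (x : E d) :
    depth X x ≤ (sideCount X u x : ℝ) / n :=
  csInf_le (bddBelow_sideCount_ratios X x) ⟨u, hu, rfl⟩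

lemma depth_le_one (x : E d) : depth X x ≤ 1 := by
  by_cases hu : ∃ u : E d, ‖u‖ = 1
  · obtain ⟨u, hu⟩ := hu
    exact (depth_le_sideCount_div X hu x).trans (sideCount_div_le_one X u x)
  · have hempty : {r : ℝ | ∃ u : E d, ‖u‖ = 1 ∧ r = (sideCount X u x : ℝ) / n} = ∅ :=
      Set.eq_empty_of_forall_notMem fun _ ⟨u, hu', _⟩ => hu ⟨u, hu'⟩
    rw [depth, hempty, Real.sInf_empty]
    exact zero_le_one

lemma depth_le_maxDepth (x : E d) : depth X x ≤ maxDepth X :=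
  le_csSup ⟨1, by rintro _ ⟨y, rfl⟩; exact depth_le_one X y⟩ ⟨x, rfl⟩

lemma USet_nonempty (hd : 0 < d) (x : E d) : (USet X x).Nonempty := by
  have hu₀ : ‖EuclideanSpace.single (⟨0, hd⟩ : Fin d) (1 : ℝ)‖ = 1 := by simp
  have hne : {r : ℝ | ∃ u : E d, ‖u‖ = 1 ∧ r = (sideCount X u x : ℝ) / n}.Nonempty :=
    ⟨_, _, hu₀, rfl⟩
  obtain ⟨u, hu, hux⟩ := hne.csInf_mem (finite_sideCount_ratios X x)
  exact ⟨u, hu, hux.symm⟩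

lemma depth_le_of_mem_USet {u x y : E d} (hu : u ∈ USet X x) (h : ⟪u, y⟫ ≤ ⟪u, x⟫) :
    depth X y ≤ depth X x := by
  rw [← hu.2]
  exact (depth_le_sideCount_div X hu.1 y).trans <|
    div_le_div_of_nonneg_right (by exact_mod_cast sideCount_mono X h) (Nat.cast_nonneg n)

end TukeyDepth

/-- For every `x ∉ M(X)` and every `z ∈ M(X)` there is an optimal direction
`u ∈ U_x` with `⟪u, x⟫ < ⟪u, z⟫`, i.e. `U_x ∩ H_{x,z} ≠ ∅`. -/
theorem USet_inter_HSet_nonempty_of_not_mem_MSet {d n : ℕ} (hd : 2 ≤ d)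
    (X : Fin n → E d) :
    ∀ x ∉ MSet X, ∀ z ∈ MSet X, (USet X x ∩ HSet x z).Nonempty := by
  intro x hx z hz
  obtain ⟨u, hu⟩ := USet_nonempty X (by omega) x
  refine ⟨u, hu, show ‖u‖ = 1 ∧ _ from ⟨hu.1, lt_of_not_ge fun hzx => hx ?_⟩⟩
  exact le_antisymm (depth_le_maxDepth X x) (hz ▸ depth_le_of_mem_USet X hu hzx)
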